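/- arXiv:2504.05798 — 3 statements merged into one kernel-verified Lean document; each statement's English description precedes it below -/
import Mathlib

section
/- Let E be a real normed vector space, h > 0, t_k = k·h, 0 ≤ k̲ < k̄, and let x* : [t_k̲, t_k̄] → E be p-times differentiable with σ_p := sup_{t ∈ [t_k̲, t_k̄]} ‖(x*)^{(p)}(t)‖ < ∞. Then for all integers q and k with p ≤ q and k̲ + q ≤ k ≤ k̄, one has ‖Σ_{i=0}^{q} (−1)^i binom(q,i) x*(t_{k−i})‖ ≤ 2^{q−p} · σ_p · h^p. -/
/-!
Write the sum as the `q`-th forward difference `Δ_h^q x*` at `t_{k-q}` and split it as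
`Δ_h^{q-p} (Δ_h^p x*)`. By the mean value theorem each forward difference of a function turns a
bound `σ` on its derivative into a bound `σ h`, so `‖Δ_h^p x*‖ ≤ σ_p h^p`; each of the remaining
`q - p` differences at most doubles a sup bound.
-/

open Set Function

theorem fwdDiff_iter_sub_nsmul_eq_sum {M G R : Type*} [AddCommGroup M] [AddCommGroup G] [Ring R]
    [Module R G] (h : M) (f : M → G) (n : ℕ) (x : M) :
    (fwdDiff h)^[n] f (x - n • h) =
      ∑ i ∈ Finset.range (n + 1), ((-1 : R) ^ i * n.choose i) • f (x - i • h) := by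
  rw [fwdDiff_iter_eq_sum_shift, ← Finset.sum_range_reflect]
  refine Finset.sum_congr rfl fun i hi => ?_
  have hin : i ≤ n := Nat.lt_succ_iff.mp (Finset.mem_range.mp hi)
  rw [Nat.add_sub_cancel, Nat.sub_sub_self hin, Nat.choose_symm hin, sub_nsmul h hin,
    ← sub_eq_add_neg, sub_add_sub_cancel, ← Int.cast_smul_eq_zsmul R]
  push_cast
  rfl

section Interval

variable {A B h : ℝ}

section SupBound

variable {E : Type*} [SeminormedAddCommGroup E]

theorem Icc_sub_subset_Icc (hh : 0 ≤ h) : Icc A (B - h) ⊆ Icc A B :=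
  Icc_subset_Icc_right (by linarith)

theorem mapsTo_add_Icc_sub (hh : 0 ≤ h) : MapsTo (· + h) (Icc A (B - h)) (Icc A B) :=
  fun _ ht => ⟨by linarith [ht.1], by linarith [ht.2]⟩

theorem norm_fwdDiff_le_two_mul {g : ℝ → E} {M : ℝ} (hh : 0 ≤ h)
    (hM : ∀ t ∈ Icc A B, ‖g t‖ ≤ M) : ∀ t ∈ Icc A (B - h), ‖fwdDiff h g t‖ ≤ 2 * M := fun t ht =>
  calc ‖g (t + h) - g t‖ ≤ ‖g (t + h)‖ + ‖g t‖ := norm_sub_le _ _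
    _ ≤ M + M := add_le_add (hM _ (mapsTo_add_Icc_sub hh ht)) (hM t (Icc_sub_subset_Icc hh ht))
    _ = 2 * M := by ring

theorem norm_fwdDiff_iter_le_two_pow_mul {g : ℝ → E} {M : ℝ} (hh : 0 ≤ h)
    (hM : ∀ t ∈ Icc A B, ‖g t‖ ≤ M) (r : ℕ) :
    ∀ t ∈ Icc A (B - r * h), ‖(fwdDiff h)^[r] g t‖ ≤ 2 ^ r * M := by
  induction r with
  | zero => simpa using hM
  | succ r ih =>
    intro t ht
    rw [iterate_succ_apply', pow_succ', mul_assoc]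
    refine norm_fwdDiff_le_two_mul hh ih t ?_
    rwa [sub_sub, ← add_one_mul, ← Nat.cast_add_one]

end SupBound

variable {E : Type*} [NormedAddCommGroup E] [NormedSpace ℝ E]

theorem hasDerivWithinAt_fwdDiff {f f' : ℝ → E} (hh : 0 ≤ h)
    (hf : ∀ t ∈ Icc A B, HasDerivWithinAt f (f' t) (Icc A B) t) :
    ∀ t ∈ Icc A (B - h), HasDerivWithinAt (fwdDiff h f) (fwdDiff h f' t) (Icc A (B - h)) t := by
  intro t ht
  have hshift : HasDerivWithinAt (fun s => f (s + h)) (f' (t + h)) (Icc A (B - h)) t := by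
    simpa [comp_def] using (hf _ (mapsTo_add_Icc_sub hh ht)).scomp t
      ((hasDerivWithinAt_id t _).add_const h) (mapsTo_add_Icc_sub hh)
  exact hshift.sub ((hf t (Icc_sub_subset_Icc hh ht)).mono (Icc_sub_subset_Icc hh))

theorem norm_fwdDiff_le_of_norm_deriv_le {f f' : ℝ → E} {σ : ℝ} (hh : 0 ≤ h)
    (hf : ∀ t ∈ Icc A B, HasDerivWithinAt f (f' t) (Icc A B) t)
    (hσ : ∀ t ∈ Icc A B, ‖f' t‖ ≤ σ) : ∀ t ∈ Icc A (B - h), ‖fwdDiff h f t‖ ≤ σ * h := by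
  intro t ht
  simpa [fwdDiff, abs_of_nonneg hh] using
    (convex_Icc A B).norm_image_sub_le_of_norm_hasDerivWithin_le hf hσ
      (Icc_sub_subset_Icc hh ht) (mapsTo_add_Icc_sub hh ht)

theorem norm_fwdDiff_iter_le_of_norm_deriv_le (hh : 0 ≤ h) {p : ℕ} {d : ℕ → ℝ → E} {σ : ℝ}
    (hd : ∀ i < p, ∀ t ∈ Icc A B, HasDerivWithinAt (d i) (d (i + 1) t) (Icc A B) t)
    (hσ : ∀ t ∈ Icc A B, ‖d p t‖ ≤ σ) :
    ∀ t ∈ Icc A (B - p * h), ‖(fwdDiff h)^[p] (d 0) t‖ ≤ σ * h ^ p := by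
  induction p generalizing d B σ with
  | zero => simpa using hσ
  | succ p ih =>
    intro t ht
    have hdiff := ih (d := fun i => fwdDiff h (d i)) (B := B - h)
      (fun i hi => hasDerivWithinAt_fwdDiff hh (hd i (by omega)))
      (norm_fwdDiff_le_of_norm_deriv_le hh (hd p p.lt_succ_self) hσ) t
      (by rwa [sub_sub, ← one_add_mul, ← Nat.cast_one_add, add_comm 1])
    rwa [iterate_succ_apply, pow_succ', ← mul_assoc]

end Interval

theorem sharp_higher_finite_difference_bound_general
    {E : Type*} [NormedAddCommGroup E] [NormedSpace ℝ E]
    (h : ℝ) (hh : 0 < h)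
    (kl kb : ℤ)
    (p : ℕ)
    (xs : ℝ → E) (d : ℕ → ℝ → E)
    (hd0 : d 0 = xs)
    (hderiv : ∀ i < p, ∀ t ∈ Set.Icc ((kl : ℝ) * h) ((kb : ℝ) * h),
      HasDerivWithinAt (d i) (d (i + 1) t) (Set.Icc ((kl : ℝ) * h) ((kb : ℝ) * h)) t)
    (σp : ℝ)
    (hσ : ∀ t ∈ Set.Icc ((kl : ℝ) * h) ((kb : ℝ) * h), ‖d p t‖ ≤ σp)
    (q : ℕ) (hpq : p ≤ q)
    (k : ℤ) (hk1 : kl + q ≤ k) (hk2 : k ≤ kb) :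
    ‖∑ i ∈ Finset.range (q + 1),
        ((-1 : ℝ) ^ i * (q.choose i : ℝ)) • xs (((k - i : ℤ) : ℝ) * h)‖
      ≤ 2 ^ (q - p) * σp * h ^ p := by
  have hsum := fwdDiff_iter_sub_nsmul_eq_sum (R := ℝ) h xs q (k * h)
  simp only [nsmul_eq_mul, ← sub_mul] at hsum
  push_cast
  rw [← hsum]
  obtain ⟨r, rfl⟩ : ∃ r, q = r + p := ⟨q - p, by omega⟩
  have hkl : (kl : ℝ) + (r + p : ℕ) ≤ k := by exact_mod_cast hk1
  have hkb : (k : ℝ) ≤ kb := by exact_mod_cast hk2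
  have hmem : ((k : ℝ) - (r + p : ℕ)) * h ∈ Icc (kl * h) (kb * h - p * h - r * h) := by
    push_cast at hkl ⊢
    constructor <;> nlinarith
  rw [iterate_add_apply, ← hd0, Nat.add_sub_cancel, mul_assoc]
  exact norm_fwdDiff_iter_le_two_pow_mul hh.le
    (norm_fwdDiff_iter_le_of_norm_deriv_le hh.le hderiv hσ) r _ hmem

/-- A `q`-th order finite difference of a curve whose `p`-th derivative is
bounded by `σp` (with `p ≤ q`) is bounded by `2^(q−p) · σp · h^p`. -/
theorem sharp_higher_finite_difference_bound
    {E : Type*} [NormedAddCommGroup E] [NormedSpace ℝ E]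
    (h : ℝ) (hh : 0 < h)
    (kl kb : ℤ) (hkl : 0 ≤ kl) (hklkb : kl < kb)
    (p : ℕ) (hp : 1 ≤ p)
    (xs : ℝ → E) (d : ℕ → ℝ → E)
    (hd0 : d 0 = xs)
    (hderiv : ∀ i < p, ∀ t ∈ Set.Icc ((kl : ℝ) * h) ((kb : ℝ) * h),
      HasDerivWithinAt (d i) (d (i + 1) t) (Set.Icc ((kl : ℝ) * h) ((kb : ℝ) * h)) t)
    (σp : ℝ)
    (hσ : ∀ t ∈ Set.Icc ((kl : ℝ) * h) ((kb : ℝ) * h), ‖d p t‖ ≤ σp)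
    (q : ℕ) (hpq : p ≤ q)
    (k : ℤ) (hk1 : kl + q ≤ k) (hk2 : k ≤ kb) :
    ‖∑ i ∈ Finset.range (q + 1),
        ((-1 : ℝ) ^ i * (q.choose i : ℝ)) • xs (((k - i : ℤ) : ℝ) * h)‖
      ≤ 2 ^ (q - p) * σp * h ^ p :=
  sharp_higher_finite_difference_bound_general h hh kl kb p xs d hd0 hderiv σp hσ q hpq k hk1 hk2
end

section
/- Let P ≥ 1 be an integer, 0 ≤ γ < 1/(2^P − 1), b ≥ 0, and let k1 ≥ 0 be an integer. Let (e_k)_{k ≥ k1} be a sequence of nonnegative reals satisfying e_k ≤ γ·Σ_{i=1}^{P} binom(P,i)·e_{k−i} + b for all k ≥ k1 + P. Then limsup_{k→∞} e_k ≤ b/(1 − (2^P − 1)γ). -/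
/-!
With weights `aᵢ ≥ 0` of total mass `ρ = ∑ aᵢ < 1` (here `aᵢ = γ·binom(P,i)`, so `ρ = (2^P − 1)γ`),
the recursion `e_k ≤ ∑ aᵢ e_{k−i} + b` keeps `e` below any `B ≥ b/(1 − ρ)` that bounds the initial
window, because then `ρB + b ≤ B`. Once `e` is bounded, its limsup `L` satisfies `L ≤ ρL + b`,
i.e. `L ≤ b/(1 − ρ)`.
-/

open Finset Filter

theorem Nat.sum_Icc_one_choose {R : Type*} [Ring R] (n : ℕ) :
    ∑ i ∈ Icc 1 n, (n.choose i : R) = 2 ^ n - 1 := by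
  have h : ∑ i ∈ Icc 0 n, (n.choose i : R) = 2 ^ n := by
    rw [← Nat.range_succ_eq_Icc_zero, ← Nat.cast_sum, Nat.sum_range_choose, Nat.cast_pow,
      Nat.cast_ofNat]
  rw [← add_sum_Ioc_eq_sum_Icc n.zero_le, ← Icc_add_one_left_eq_Ioc, zero_add,
    Nat.choose_zero_right, Nat.cast_one] at h
  rw [← h, add_sub_cancel_left]

section WeightedRecursion

variable {e a : ℕ → ℝ} {P k₀ : ℕ} {b : ℝ}

theorem weighted_sum_le_of_le (ha : ∀ i, 0 ≤ a i) {k : ℕ} {X : ℝ}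
    (hX : ∀ i ∈ Icc 1 P, e (k - i) ≤ X) :
    ∑ i ∈ Icc 1 P, a i * e (k - i) ≤ (∑ i ∈ Icc 1 P, a i) * X := by
  rw [sum_mul]
  exact sum_le_sum fun i hi => mul_le_mul_of_nonneg_left (hX i hi) (ha i)

theorem exists_forall_le_of_le_weighted_sum (ha : ∀ i, 0 ≤ a i)
    (hρ : ∑ i ∈ Icc 1 P, a i < 1)
    (hrec : ∀ k, k₀ + P ≤ k → e k ≤ ∑ i ∈ Icc 1 P, a i * e (k - i) + b) :
    ∃ B, ∀ k, e k ≤ B := by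
  set ρ := ∑ i ∈ Icc 1 P, a i
  obtain ⟨C, hC⟩ := ((Set.finite_Iio (k₀ + P)).image e).bddAbove
  set B := max C (b / (1 - ρ))
  have hB : ρ * B + b ≤ B := by
    have := (div_le_iff₀ (sub_pos.2 hρ)).1 (le_max_right C (b / (1 - ρ)))
    linarith
  refine ⟨B, fun k => ?_⟩
  induction k using Nat.strong_induction_on with
  | _ k ih =>
    by_cases hk : k < k₀ + P
    · exact le_max_of_le_left (hC ⟨k, hk, rfl⟩)
    · have hwin : ∀ i ∈ Icc 1 P, e (k - i) ≤ B := fun i hi => by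
        have := mem_Icc.1 hi
        exact ih _ (by omega)
      linarith [hrec k (by omega), weighted_sum_le_of_le ha hwin]

theorem limsup_le_of_le_weighted_sum (ha : ∀ i, 0 ≤ a i)
    (hρ : ∑ i ∈ Icc 1 P, a i < 1) (hcob : IsCoboundedUnder (· ≤ ·) atTop e)
    (hrec : ∀ k, k₀ + P ≤ k → e k ≤ ∑ i ∈ Icc 1 P, a i * e (k - i) + b) :
    limsup e atTop ≤ b / (1 - ∑ i ∈ Icc 1 P, a i) := by
  set ρ := ∑ i ∈ Icc 1 P, a i
  set L := limsup e atTop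
  obtain ⟨B, hB⟩ := exists_forall_le_of_le_weighted_sum ha hρ hrec
  have hbdd : IsBoundedUnder (· ≤ ·) atTop e := isBoundedUnder_of ⟨B, hB⟩
  have hL : ∀ ε > 0, L ≤ ρ * (L + ε) + b := fun ε hε => by
    obtain ⟨N, hN⟩ :=
      eventually_atTop.1 (eventually_lt_of_limsup_lt (lt_add_of_pos_right L hε) hbdd)
    refine limsup_le_of_le hcob (eventually_atTop.2 ⟨N + k₀ + P, fun k hk => ?_⟩)
    have hwin : ∀ i ∈ Icc 1 P, e (k - i) ≤ L + ε := fun i hi =>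
      (hN _ (by have := (mem_Icc.1 hi).2; omega)).le
    linarith [hrec k (by omega), weighted_sum_le_of_le ha hwin]
  have hfix : (1 - ρ) * L ≤ b := le_of_forall_pos_le_add fun ε hε => by
    linarith [hL ε hε, mul_le_mul_of_nonneg_right hρ.le hε.le]
  rwa [le_div_iff₀ (sub_pos.2 hρ), mul_comm]

end WeightedRecursion

theorem sharp_recursion_limsup_general
    (P : ℕ) (γ b : ℝ) (hγ0 : 0 ≤ γ)
    (hγ1 : γ < 1 / (2 ^ P - 1))
    (k1 : ℕ) (e : ℕ → ℝ) (he0 : ∀ k, k1 ≤ k → 0 ≤ e k)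
    (hrec : ∀ k, k1 + P ≤ k →
      e k ≤ γ * ∑ i ∈ Finset.Icc 1 P, (P.choose i : ℝ) * e (k - i) + b) :
    Filter.limsup e Filter.atTop ≤ b / (1 - (2 ^ P - 1) * γ) := by
  have hρ : (2 ^ P - 1) * γ < 1 := by
    rcases (sub_nonneg.2 (one_le_pow₀ one_le_two) : (0 : ℝ) ≤ 2 ^ P - 1).eq_or_lt with h | h
    · -- only for `P = 0`, where `1 / (2 ^ P - 1)` is the junk value `1 / 0 = 0`
      rw [← h, div_zero] at hγ1
      linarith
    · rwa [lt_div_iff₀ h, mul_comm] at hγ1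
  have hweights : ∑ i ∈ Icc 1 P, γ * P.choose i = (2 ^ P - 1) * γ := by
    rw [← mul_sum, Nat.sum_Icc_one_choose, mul_comm]
  have hcob : IsCoboundedUnder (· ≤ ·) atTop e :=
    isCoboundedUnder_le_of_eventually_le atTop (eventually_atTop.2 ⟨k1, he0⟩)
  have key := limsup_le_of_le_weighted_sum (a := fun i => γ * P.choose i)
    (fun i => by positivity) (hweights ▸ hρ) hcob
    (fun k hk => by simpa only [mul_sum, mul_assoc] using hrec k hk)
  rwa [hweights] at key

/-- Asymptotic form of the SHARP tracking-error recursion: if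
`e_k ≤ γ·Σ_{i=1}^P binom(P,i)·e_{k−i} + b` for all `k ≥ k1 + P` with
`γ < 1/(2^P − 1)`, then `limsup_k e_k ≤ b/(1 − (2^P − 1)γ)`. -/
theorem sharp_recursion_limsup
    (P : ℕ) (hP : 1 ≤ P) (γ b : ℝ) (hγ0 : 0 ≤ γ)
    (hγ1 : γ < 1 / (2 ^ P - 1)) (hb : 0 ≤ b)
    (k1 : ℕ) (e : ℕ → ℝ) (he0 : ∀ k, k1 ≤ k → 0 ≤ e k)
    (hrec : ∀ k, k1 + P ≤ k →
      e k ≤ γ * ∑ i ∈ Finset.Icc 1 P, (P.choose i : ℝ) * e (k - i) + b) :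
    Filter.limsup e Filter.atTop ≤ b / (1 - (2 ^ P - 1) * γ) :=
  sharp_recursion_limsup_general P γ b hγ0 hγ1 k1 e he0 hrec
end

section
/- Let E be ℝⁿ, h > 0, t_k = k·h, and let f : E × ℝ → ℝ with f(·;t) differentiable for each t. Assume: (i) ‖∇_x f(x;t) − ∇_x f(y;t)‖ ≤ L·‖x − y‖ for all x,y,t with L > 0; (ii) f(·;t) is μ-PL on E for all t with 0 < μ ≤ L, where f*(t) := inf_y f(y;t); (iii) X*(t) := argmin_x f(x;t) is nonempty for all t; (iv) ‖∇_x f(x;s) − ∇_x f(x;t)‖ ≤ L_{1,1}|s − t|. Fix α ∈ (0, 2/L), v ≥ 0, set κ := L/μ and θ := 1 − αμ(2 − αL) ∈ [0,1), and let the integer C satisfy C > log(κ)/log(1/θ) (so that κ·θ^C < 1). Let sequences (x̂_k), (x_k) satisfy, for every k ≥ 1: ‖x̂_k − x_{k−1}‖ ≤ v·h and x_k = G_k^C(x̂_k) with G_k(y) = y − α∇_x f(y;t_k). Then: limsup_{k→∞} dist(x̂_k, X*(t_k)) ≤ ((v + L_{1,1}/μ)/(1 − √(κθ^C)))·h, and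 limsup_{k→∞} ( f(x̂_k; t_k) − f*(t_k) ) ≤ (L/2)·((v + L_{1,1}/μ)/(1 − √(κθ^C)))²·h². -/
/-!
For a `μ`-PL function with `L`-Lipschitz gradient, the descent lemma makes one gradient step
shrink the gap `f - f*` by `θ = 1 - αμ(2 - αL)`, and it also gives
`f x - f* ≤ (L/2) dist(x, X*)²`. Conversely, PL yields the quadratic growth
`dist(x, X*)² ≤ (2/μ)(f x - f*)`: gradient descent started at `x` converges to a minimizer, and
its path length is paid for by the decrease of `√(f - f*)`. Chaining the three, `C` correction
steps shrink the distance to `X*(t)` by `√(κθ^C)`. Quadratic growth combined with PL is the error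
bound `dist(x, X*) ≤ ‖∇f x‖/μ`, so by the time-Lipschitz gradient the set `X*(t)` drifts by at most
`L₁₁h/μ` per sampling step, while a prediction moves at most `vh`. The resulting recursion
`d_{k+1} ≤ √(κθ^C) d_k + (v + L₁₁/μ)h` gives both bounds.
-/

open Filter Topology Metric

theorem iterate_le_pow_mul {α : Type*} {Φ : α → ℝ} {G : α → α} {θ : ℝ} (hθ : 0 ≤ θ)
    (h : ∀ z, Φ (G z) ≤ θ * Φ z) (n : ℕ) (z : α) : Φ (G^[n] z) ≤ θ ^ n * Φ z := by
  induction n with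
  | zero => simp
  | succ n ih =>
    rw [Function.iterate_succ_apply', pow_succ', mul_assoc]
    exact (h _).trans (mul_le_mul_of_nonneg_left ih hθ)

theorem mul_sqrt_mul_le_sqrt_sub_sqrt {Δ Δ' G c μ : ℝ} (hμ : 0 < μ) (hΔ' : 0 ≤ Δ') (hc : 0 ≤ c)
    (hG : 0 ≤ G) (hdesc : Δ' ≤ Δ - c * G ^ 2) (hpl : 2 * μ * Δ ≤ G ^ 2) :
    c * √(μ / 2) * G ≤ √Δ - √Δ' := by
  set r := √(μ / 2)
  set p := √Δ
  set q := √Δ'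
  have hΔ : 0 ≤ Δ := by nlinarith
  have hp2 : p ^ 2 = Δ := Real.sq_sqrt hΔ
  have hq2 : q ^ 2 = Δ' := Real.sq_sqrt hΔ'
  have hr2 : r ^ 2 = μ / 2 := Real.sq_sqrt (by positivity)
  have hqp : q ≤ p := Real.sqrt_le_sqrt (by nlinarith)
  have hpG : (p + q) * r ≤ G := by
    have h2rp : 2 * r * p ≤ G :=
      (pow_le_pow_iff_left₀ (by positivity) hG two_ne_zero).1 (by nlinarith)
    nlinarith [Real.sqrt_nonneg (μ / 2)]
  rcases hG.eq_or_lt with rfl | hG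
  · simpa using hqp
  refine le_of_mul_le_mul_right ?_ hG
  calc c * r * G * G = c * G ^ 2 * r := by ring
    _ ≤ (p - q) * (p + q) * r := mul_le_mul_of_nonneg_right (by nlinarith) (Real.sqrt_nonneg _)
    _ ≤ (p - q) * G := by rw [mul_assoc]; exact mul_le_mul_of_nonneg_left hpG (by linarith)

theorem summable_dist_and_mul_tsum_le {X : Type*} [PseudoMetricSpace X] {y : ℕ → X}
    {s : ℕ → ℝ} {K : ℝ} (hK : 0 < K) (hs : ∀ j, 0 ≤ s j)
    (h : ∀ j, K * dist (y j) (y (j + 1)) ≤ s j - s (j + 1)) :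
    Summable (fun j => dist (y j) (y (j + 1))) ∧ K * ∑' j, dist (y j) (y (j + 1)) ≤ s 0 := by
  have hsum : ∀ N, ∑ j ∈ Finset.range N, dist (y j) (y (j + 1)) ≤ s 0 / K := by
    intro N
    rw [le_div_iff₀' hK, Finset.mul_sum]
    calc ∑ j ∈ Finset.range N, K * dist (y j) (y (j + 1))
        ≤ ∑ j ∈ Finset.range N, (s j - s (j + 1)) := Finset.sum_le_sum fun j _ => h j
      _ = s 0 - s N := Finset.sum_range_sub' s N
      _ ≤ s 0 := sub_le_self _ (hs N)
  exact ⟨summable_of_sum_range_le (fun _ => dist_nonneg) hsum,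
    (le_div_iff₀' hK).1 (Real.tsum_le_of_sum_range_le (fun _ => dist_nonneg) hsum)⟩

theorem mul_pow_lt_one_of_log_div_log_lt {κ θ : ℝ} {C : ℕ} (hκ : 0 < κ) (hθ0 : 0 ≤ θ)
    (hθ1 : θ < 1) (hC : Real.log κ / Real.log (1 / θ) < C) : κ * θ ^ C < 1 := by
  rcases hθ0.eq_or_lt with rfl | hθ0
  · have hC0 : C ≠ 0 := by rintro rfl; simp at hC
    simp [hC0]
  have hlog : 0 < Real.log (1 / θ) := Real.log_pos ((one_lt_div hθ0).2 hθ1)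
  rw [div_lt_iff₀ hlog, one_div, Real.log_inv] at hC
  rw [← Real.log_neg_iff (by positivity), Real.log_mul hκ.ne' (by positivity), Real.log_pow]
  linarith

theorem sqrt_div_mul_pow_lt_one {μ L α : ℝ} {C : ℕ} (hμ : 0 < μ) (hμL : μ ≤ L) (hα : 0 < α)
    (hαL : α * L < 2) (hC : Real.log (L / μ) / Real.log (1 / (1 - α * μ * (2 - α * L))) < C) :
    √(L / μ * (1 - α * μ * (2 - α * L)) ^ C) < 1 := by
  have hθ0 : 0 ≤ 1 - α * μ * (2 - α * L) := by
    nlinarith [sq_nonneg (1 - α * μ), mul_nonneg (mul_nonneg hα.le hα.le) hμ.le]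
  have hθ1 : 1 - α * μ * (2 - α * L) < 1 := by
    nlinarith [mul_pos (mul_pos hα hμ) (sub_pos.2 hαL)]
  exact (Real.sqrt_lt' one_pos).2
    (by simpa using mul_pow_lt_one_of_log_div_log_lt (div_pos (hμ.trans_le hμL) hμ) hθ0 hθ1 hC)

theorem exists_tendsto_ge_of_le_mul_add {d : ℕ → ℝ} {ρ b : ℝ} (hρ0 : 0 ≤ ρ) (hρ1 : ρ < 1)
    (h : ∀ k, d (k + 1) ≤ ρ * d k + b) :
    ∃ u : ℕ → ℝ, Tendsto u atTop (𝓝 (b / (1 - ρ))) ∧ ∀ k, d k ≤ u k := by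
  set R := b / (1 - ρ)
  have hR : ρ * R + b = R := by
    have : R * (1 - ρ) = b := div_mul_cancel₀ _ (sub_pos.2 hρ1).ne'
    linarith
  refine ⟨fun k => ρ ^ k * (d 0 - R) + R, ?_, fun k => ?_⟩
  · simpa using ((tendsto_pow_atTop_nhds_zero_of_lt_one hρ0 hρ1).mul_const (d 0 - R)).add_const R
  induction k with
  | zero => simp
  | succ k ih =>
    calc d (k + 1) ≤ ρ * (ρ ^ k * (d 0 - R) + R) + b := (h k).trans (by gcongr)
      _ = ρ ^ (k + 1) * (d 0 - R) + R := by linear_combination hR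

theorem limsup_le_of_le_of_tendsto {φ u : ℕ → ℝ} {c l : ℝ} (hφ : ∀ k, c ≤ φ k)
    (h : ∀ k, φ k ≤ u k) (hu : Tendsto u atTop (𝓝 l)) : limsup φ atTop ≤ l :=
  (limsup_le_limsup (Eventually.of_forall h) (isCoboundedUnder_le_of_le atTop hφ)
    hu.isBoundedUnder_le).trans_eq hu.limsup_eq

theorem iInf_eq_of_isMin {α : Type*} [Nonempty α] {f : α → ℝ} {z : α} (hz : ∀ y, f z ≤ f y) :
    ⨅ y, f y = f z :=
  le_antisymm (ciInf_le ⟨f z, by rintro _ ⟨y, rfl⟩; exact hz y⟩ z) (le_ciInf hz)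

section Smooth

variable {E : Type*} [NormedAddCommGroup E] [InnerProductSpace ℝ E] {f : E → ℝ} {g : E → E}
  {L : ℝ}

theorem le_add_inner_add_of_lipschitz_gradient (hgrad : ∀ x, HasFDerivAt f (innerSL ℝ (g x)) x)
    (hlip : ∀ x y, ‖g x - g y‖ ≤ L * ‖x - y‖) (x y : E) :
    f y ≤ f x + inner ℝ (g x) (y - x) + L / 2 * ‖y - x‖ ^ 2 := by
  set v := y - x
  -- `φ` is monotone on `[0, ∞)`: its derivative `⟪g x - g (x + s • v), v⟫ + L s ‖v‖²` is `≥ 0`.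
  let φ : ℝ → ℝ := fun s => f x + s * inner ℝ (g x) v + L / 2 * s ^ 2 * ‖v‖ ^ 2 - f (x + s • v)
  have hφ : ∀ s, HasDerivAt φ
      (inner ℝ (g x) v + L * s * ‖v‖ ^ 2 - inner ℝ (g (x + s • v)) v) s := by
    intro s
    have hpath : HasDerivAt (fun s : ℝ => x + s • v) v s := by
      simpa using ((hasDerivAt_id s).smul_const v).const_add x
    have hf := (hgrad (x + s • v)).comp_hasDerivAt s hpath
    have hq : HasDerivAt (fun s : ℝ => L / 2 * s ^ 2 * ‖v‖ ^ 2) (L * s * ‖v‖ ^ 2) s := by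
      refine (((hasDerivAt_pow 2 s).const_mul (L / 2)).mul_const (‖v‖ ^ 2)).congr_deriv ?_
      simp only [Nat.cast_ofNat, Nat.add_one_sub_one, pow_one]; ring
    refine ((((hasDerivAt_id s).mul_const (inner ℝ (g x) v)).const_add (f x)).add hq).sub hf
      |>.congr_deriv ?_
    simp
  have hmono : MonotoneOn φ (Set.Ici 0) := by
    refine monotoneOn_of_hasDerivWithinAt_nonneg (convex_Ici 0)
      (fun s _ => (hφ s).continuousAt.continuousWithinAt) (fun s _ => (hφ s).hasDerivWithinAt)
      fun s hs => ?_
    rw [interior_Ici, Set.mem_Ioi] at hs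
    have hcs : inner ℝ (g (x + s • v) - g x) v ≤ L * s * ‖v‖ ^ 2 :=
      calc inner ℝ (g (x + s • v) - g x) v ≤ ‖g (x + s • v) - g x‖ * ‖v‖ := real_inner_le_norm _ _
        _ ≤ L * ‖x + s • v - x‖ * ‖v‖ := by gcongr; exact hlip _ _
        _ = L * s * ‖v‖ ^ 2 := by
          rw [add_sub_cancel_left, norm_smul, Real.norm_of_nonneg hs.le]; ring
    rw [inner_sub_left] at hcs
    linarith
  have h01 := hmono (Set.mem_Ici.2 le_rfl) (Set.mem_Ici.2 zero_le_one) zero_le_one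
  simp only [φ, v, zero_smul, add_zero, one_smul, add_sub_cancel] at h01
  linarith

theorem le_sub_of_gradient_step (hgrad : ∀ x, HasFDerivAt f (innerSL ℝ (g x)) x)
    (hlip : ∀ x y, ‖g x - g y‖ ≤ L * ‖x - y‖) (a : ℝ) (z : E) :
    f (z - a • g z) ≤ f z - a * (1 - a * L / 2) * ‖g z‖ ^ 2 := by
  have h := le_add_inner_add_of_lipschitz_gradient hgrad hlip z (z - a • g z)
  rw [sub_sub_cancel_left, inner_neg_right, real_inner_smul_right, real_inner_self_eq_norm_sq,
    norm_neg, norm_smul, mul_pow, Real.norm_eq_abs, sq_abs] at h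
  linarith

theorem gradient_eq_zero_of_isMin (hgrad : ∀ x, HasFDerivAt f (innerSL ℝ (g x)) x) {z : E}
    (hz : ∀ y, f z ≤ f y) : g z = 0 := by
  have hmin : IsLocalMin f z := Eventually.of_forall hz
  simpa using congrArg (· (g z)) (hmin.hasFDerivAt_eq_zero (hgrad z))

end Smooth

theorem two_mul_mul_sub_iInf_le_sq_norm {E F : Type*} [Norm F] {f : E → ℝ} {g : E → F} {μ : ℝ}
    (hpl : ∀ x, f x - ⨅ y, f y ≤ 1 / (2 * μ) * ‖g x‖ ^ 2) (hμ : 0 < μ) (x : E) :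
    2 * μ * (f x - ⨅ y, f y) ≤ ‖g x‖ ^ 2 := by
  have h := hpl x
  rw [div_mul_eq_mul_div, one_mul, le_div_iff₀ (by positivity)] at h
  linarith

section PolyakLojasiewicz

variable {E : Type*} [NormedAddCommGroup E] [InnerProductSpace ℝ E] {f : E → ℝ} {g : E → E}
  {μ L a : ℝ}

theorem sub_iInf_gradient_step_le (hgrad : ∀ x, HasFDerivAt f (innerSL ℝ (g x)) x)
    (hlip : ∀ x y, ‖g x - g y‖ ≤ L * ‖x - y‖)
    (hpl : ∀ x, f x - ⨅ y, f y ≤ 1 / (2 * μ) * ‖g x‖ ^ 2) (hμ : 0 < μ) (ha : 0 ≤ a)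
    (haL : a * L ≤ 2) (z : E) :
    f (z - a • g z) - ⨅ y, f y ≤ (1 - a * μ * (2 - a * L)) * (f z - ⨅ y, f y) := by
  have hdesc := le_sub_of_gradient_step hgrad hlip a z
  have hgrad_sq := two_mul_mul_sub_iInf_le_sq_norm hpl hμ z
  have hc : 0 ≤ a * (1 - a * L / 2) := mul_nonneg ha (by linarith)
  nlinarith [mul_le_mul_of_nonneg_left hgrad_sq hc]

theorem exists_isMin_mul_dist_le [CompleteSpace E]
    (hgrad : ∀ x, HasFDerivAt f (innerSL ℝ (g x)) x) (hlip : ∀ x y, ‖g x - g y‖ ≤ L * ‖x - y‖)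
    (hpl : ∀ x, f x - ⨅ y, f y ≤ 1 / (2 * μ) * ‖g x‖ ^ 2) (hμ : 0 < μ)
    (hne : {z | ∀ y, f z ≤ f y}.Nonempty) (ha : 0 < a) (haL : a * L < 2) (x : E) :
    ∃ z, (∀ y, f z ≤ f y) ∧ (1 - a * L / 2) * √(μ / 2) * dist x z ≤ √(f x - ⨅ y, f y) := by
  obtain ⟨m, hm⟩ := hne
  have hgap : ∀ z, 0 ≤ f z - ⨅ y, f y := fun z => by rw [iInf_eq_of_isMin hm]; linarith [hm z]
  set y : ℕ → E := fun j => (fun z => z - a • g z)^[j] x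
  have hy : ∀ j, y (j + 1) = y j - a • g (y j) := fun j => Function.iterate_succ_apply' _ _ _
  have hdist : ∀ j, dist (y j) (y (j + 1)) = a * ‖g (y j)‖ := fun j => by
    rw [hy, dist_eq_norm, sub_sub_cancel, norm_smul, Real.norm_of_nonneg ha.le]
  set K := (1 - a * L / 2) * √(μ / 2)
  have hK : 0 < K := mul_pos (by linarith) (Real.sqrt_pos.2 (by positivity))
  have hstep : ∀ j, K * dist (y j) (y (j + 1))
      ≤ √(f (y j) - ⨅ y, f y) - √(f (y (j + 1)) - ⨅ y, f y) := fun j => by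
    have hdesc := le_sub_of_gradient_step hgrad hlip a (y j)
    rw [← hy] at hdesc
    have hsqrt := mul_sqrt_mul_le_sqrt_sub_sqrt (Δ' := f (y (j + 1)) - ⨅ y, f y)
      (c := a * (1 - a * L / 2)) hμ (hgap _) (mul_nonneg ha.le (by linarith)) (norm_nonneg _)
      (by linarith) (two_mul_mul_sub_iInf_le_sq_norm hpl hμ (y j))
    rw [hdist]
    linarith [show K * (a * ‖g (y j)‖) = a * (1 - a * L / 2) * √(μ / 2) * ‖g (y j)‖ by ring]
  obtain ⟨hsum, htsum⟩ :=
    summable_dist_and_mul_tsum_le hK (fun _ => Real.sqrt_nonneg _) hstep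
  obtain ⟨z, hz⟩ := cauchySeq_tendsto_of_complete (cauchySeq_of_summable_dist hsum)
  have hgz : g z = 0 := by
    have hg_cont : Continuous g :=
      (LipschitzWith.of_dist_le' fun x y => by simpa only [dist_eq_norm] using hlip x y).continuous
    refine tendsto_nhds_unique ((hg_cont.tendsto z).comp hz) ?_
    rw [tendsto_zero_iff_norm_tendsto_zero]
    simpa [hdist, ha.ne'] using hsum.tendsto_atTop_zero.div_const a
  refine ⟨z, fun w => ?_, ?_⟩
  · have hz0 := hpl z
    rw [hgz, norm_zero, zero_pow two_ne_zero, mul_zero] at hz0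
    linarith [hgap w]
  calc K * dist x z ≤ K * ∑' j, dist (y j) (y (j + 1)) :=
        mul_le_mul_of_nonneg_left
          (dist_le_tsum_of_dist_le_of_tendsto₀ _ (fun _ => le_rfl) hsum hz) hK.le
    _ ≤ √(f x - ⨅ y, f y) := htsum

theorem infDist_le_sqrt_of_pl [CompleteSpace E]
    (hgrad : ∀ x, HasFDerivAt f (innerSL ℝ (g x)) x) (hlip : ∀ x y, ‖g x - g y‖ ≤ L * ‖x - y‖)
    (hpl : ∀ x, f x - ⨅ y, f y ≤ 1 / (2 * μ) * ‖g x‖ ^ 2) (hμ : 0 < μ)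
    (hne : {z | ∀ y, f z ≤ f y}.Nonempty) (x : E) :
    infDist x {z | ∀ y, f z ≤ f y} ≤ √(2 / μ * (f x - ⨅ y, f y)) := by
  set D := infDist x {z | ∀ y, f z ≤ f y}
  -- let the step size tend to `0` in `exists_isMin_mul_dist_le`
  have hD : √(μ / 2) * D ≤ √(f x - ⨅ y, f y) := by
    have hlim : Tendsto (fun a => (1 - a * L / 2) * √(μ / 2) * D) (𝓝[>] 0)
        (𝓝 (√(μ / 2) * D)) := by
      have hc : Continuous fun a : ℝ => (1 - a * L / 2) * √(μ / 2) * D := by fun_prop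
      simpa using (hc.tendsto 0).mono_left nhdsWithin_le_nhds
    have hsmall : ∀ᶠ a in 𝓝[>] (0 : ℝ), a * L < 2 :=
      (((continuous_mul_const L).tendsto' 0 0 (zero_mul L)).mono_left nhdsWithin_le_nhds)
        |>.eventually (gt_mem_nhds two_pos)
    refine le_of_tendsto hlim ?_
    filter_upwards [self_mem_nhdsWithin, hsmall] with a ha haL
    obtain ⟨z, hz, hdz⟩ := exists_isMin_mul_dist_le hgrad hlip hpl hμ hne ha haL x
    exact (mul_le_mul_of_nonneg_left (infDist_le_dist_of_mem (s := {z | ∀ y, f z ≤ f y}) hz)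
      (mul_nonneg (by linarith) (Real.sqrt_nonneg _))).trans hdz
  have hinv : √(2 / μ) * √(μ / 2) = 1 := by
    rw [← Real.sqrt_mul (by positivity), div_mul_div_comm, mul_comm 2 μ,
      div_self (by positivity), Real.sqrt_one]
  calc D = √(2 / μ) * (√(μ / 2) * D) := by rw [← mul_assoc, hinv, one_mul]
    _ ≤ √(2 / μ) * √(f x - ⨅ y, f y) := mul_le_mul_of_nonneg_left hD (Real.sqrt_nonneg _)
    _ = √(2 / μ * (f x - ⨅ y, f y)) := (Real.sqrt_mul (by positivity) _).symm

theorem infDist_le_norm_div_of_pl [CompleteSpace E]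
    (hgrad : ∀ x, HasFDerivAt f (innerSL ℝ (g x)) x) (hlip : ∀ x y, ‖g x - g y‖ ≤ L * ‖x - y‖)
    (hpl : ∀ x, f x - ⨅ y, f y ≤ 1 / (2 * μ) * ‖g x‖ ^ 2) (hμ : 0 < μ)
    (hne : {z | ∀ y, f z ≤ f y}.Nonempty) (x : E) :
    infDist x {z | ∀ y, f z ≤ f y} ≤ ‖g x‖ / μ := by
  refine (infDist_le_sqrt_of_pl hgrad hlip hpl hμ hne x).trans
    ((Real.sqrt_le_left (by positivity)).2 ?_)
  calc 2 / μ * (f x - ⨅ y, f y) ≤ 2 / μ * (1 / (2 * μ) * ‖g x‖ ^ 2) :=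
        mul_le_mul_of_nonneg_left (hpl x) (by positivity)
    _ = (‖g x‖ / μ) ^ 2 := by field_simp

theorem sub_iInf_le_mul_infDist_sq (hgrad : ∀ x, HasFDerivAt f (innerSL ℝ (g x)) x)
    (hlip : ∀ x y, ‖g x - g y‖ ≤ L * ‖x - y‖) (hL : 0 < L)
    (hne : {z | ∀ y, f z ≤ f y}.Nonempty) (x : E) :
    f x - ⨅ y, f y ≤ L / 2 * infDist x {z | ∀ y, f z ≤ f y} ^ 2 := by
  obtain ⟨m, hm⟩ := hne
  rw [iInf_eq_of_isMin hm]
  have hle : √(2 / L * (f x - f m)) ≤ infDist x {z | ∀ y, f z ≤ f y} := by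
    refine (le_infDist ⟨m, hm⟩).2 fun z hz => (Real.sqrt_le_left dist_nonneg).2 ?_
    have hdesc := le_add_inner_add_of_lipschitz_gradient hgrad hlip z x
    rw [gradient_eq_zero_of_isMin hgrad hz, inner_zero_left, add_zero, ← dist_eq_norm] at hdesc
    have hmz : f m = f z := le_antisymm (hm z) (hz m)
    calc 2 / L * (f x - f m) ≤ 2 / L * (L / 2 * dist x z ^ 2) :=
          mul_le_mul_of_nonneg_left (by linarith) (by positivity)
      _ = dist x z ^ 2 := by field_simp
  calc f x - f m = L / 2 * (2 / L * (f x - f m)) := by field_simp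
    _ ≤ L / 2 * infDist x {z | ∀ y, f z ≤ f y} ^ 2 :=
        mul_le_mul_of_nonneg_left ((Real.sqrt_le_left infDist_nonneg).1 hle) (by positivity)

theorem infDist_iterate_gradient_step_le [CompleteSpace E]
    (hgrad : ∀ x, HasFDerivAt f (innerSL ℝ (g x)) x) (hlip : ∀ x y, ‖g x - g y‖ ≤ L * ‖x - y‖)
    (hpl : ∀ x, f x - ⨅ y, f y ≤ 1 / (2 * μ) * ‖g x‖ ^ 2) (hμ : 0 < μ) (hμL : μ ≤ L)
    (hne : {z | ∀ y, f z ≤ f y}.Nonempty) (ha : 0 ≤ a) (haL : a * L ≤ 2) (n : ℕ) (z : E) :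
    infDist ((fun y => y - a • g y)^[n] z) {z | ∀ y, f z ≤ f y}
      ≤ √(L / μ * (1 - a * μ * (2 - a * L)) ^ n) * infDist z {z | ∀ y, f z ≤ f y} := by
  set θ := 1 - a * μ * (2 - a * L)
  set D := infDist z {z | ∀ y, f z ≤ f y}
  have hθ : 0 ≤ θ := by nlinarith [sq_nonneg (1 - a * μ), mul_nonneg (mul_nonneg ha ha) hμ.le]
  have hgap : f ((fun y => y - a • g y)^[n] z) - ⨅ y, f y ≤ θ ^ n * (L / 2 * D ^ 2) :=
    (iterate_le_pow_mul (Φ := fun x => f x - ⨅ y, f y) hθ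
      (sub_iInf_gradient_step_le hgrad hlip hpl hμ ha haL) n z).trans
      (mul_le_mul_of_nonneg_left
        (sub_iInf_le_mul_infDist_sq hgrad hlip (hμ.trans_le hμL) hne z) (pow_nonneg hθ n))
  calc infDist ((fun y => y - a • g y)^[n] z) {z | ∀ y, f z ≤ f y}
      ≤ √(2 / μ * (f ((fun y => y - a • g y)^[n] z) - ⨅ y, f y)) :=
        infDist_le_sqrt_of_pl hgrad hlip hpl hμ hne _
    _ ≤ √(2 / μ * (θ ^ n * (L / 2 * D ^ 2))) :=
        Real.sqrt_le_sqrt (mul_le_mul_of_nonneg_left hgap (by positivity))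
    _ = √(L / μ * θ ^ n) * D := by
        rw [show 2 / μ * (θ ^ n * (L / 2 * D ^ 2)) = L / μ * θ ^ n * D ^ 2 by field_simp,
          Real.sqrt_mul' _ (sq_nonneg D), Real.sqrt_sq infDist_nonneg]

end PolyakLojasiewicz

section TimeVarying

variable {E : Type*} [NormedAddCommGroup E] [InnerProductSpace ℝ E] [CompleteSpace E]
  {f : E → ℝ → ℝ} {g : E → ℝ → E} {μ L L' a : ℝ}

theorem infDist_le_infDist_add_of_lipschitz_time
    (hgrad : ∀ x t, HasFDerivAt (fun y => f y t) (innerSL ℝ (g x t)) x)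
    (hlipx : ∀ x y t, ‖g x t - g y t‖ ≤ L * ‖x - y‖)
    (hpl : ∀ x t, f x t - ⨅ y, f y t ≤ 1 / (2 * μ) * ‖g x t‖ ^ 2) (hμ : 0 < μ)
    (hne : ∀ t, {x | ∀ y, f x t ≤ f y t}.Nonempty)
    (hlipt : ∀ x s t, ‖g x s - g x t‖ ≤ L' * |s - t|) (s t : ℝ) (x : E) :
    infDist x {z | ∀ y, f z t ≤ f y t}
      ≤ infDist x {z | ∀ y, f z s ≤ f y s} + L' * |s - t| / μ := by
  rw [← sub_le_iff_le_add, le_infDist (hne s)]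
  intro z hz
  have hgz : ‖g z t‖ ≤ L' * |s - t| := by
    simpa [gradient_eq_zero_of_isMin (hgrad · s) hz, abs_sub_comm] using hlipt z t s
  have hbound := infDist_le_norm_div_of_pl (hgrad · t) (hlipx · · t) (hpl · t) hμ (hne t) z
  have htri := infDist_le_infDist_add_dist (s := {z | ∀ y, f z t ≤ f y t}) (x := x) (y := z)
  have hdiv := div_le_div_of_nonneg_right hgz hμ.le
  linarith

theorem infDist_le_of_iterate_gradient_step
    (hgrad : ∀ x t, HasFDerivAt (fun y => f y t) (innerSL ℝ (g x t)) x)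
    (hlipx : ∀ x y t, ‖g x t - g y t‖ ≤ L * ‖x - y‖)
    (hpl : ∀ x t, f x t - ⨅ y, f y t ≤ 1 / (2 * μ) * ‖g x t‖ ^ 2) (hμ : 0 < μ) (hμL : μ ≤ L)
    (hne : ∀ t, {x | ∀ y, f x t ≤ f y t}.Nonempty)
    (hlipt : ∀ x s t, ‖g x s - g x t‖ ≤ L' * |s - t|) (ha : 0 ≤ a) (haL : a * L ≤ 2) (n : ℕ)
    (s t : ℝ) (z x : E) :
    infDist x {w | ∀ y, f w t ≤ f y t}
      ≤ √(L / μ * (1 - a * μ * (2 - a * L)) ^ n) * infDist z {w | ∀ y, f w s ≤ f y s}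
        + L' * |s - t| / μ + dist x ((fun y => y - a • g y s)^[n] z) := by
  have hcorrect := infDist_iterate_gradient_step_le (hgrad · s) (hlipx · · s) (hpl · s) hμ hμL
    (hne s) ha haL n z
  have hdrift := infDist_le_infDist_add_of_lipschitz_time hgrad hlipx hpl hμ hne hlipt s t
    ((fun y => y - a • g y s)^[n] z)
  have htri := infDist_le_infDist_add_dist (s := {w | ∀ y, f w t ≤ f y t}) (x := x)
    (y := (fun y => y - a • g y s)^[n] z)
  linarith

end TimeVarying

theorem sharp_pl_tracking_error_general
    (n : ℕ) (h : ℝ) (hh : 0 < h)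
    (f : EuclideanSpace ℝ (Fin n) → ℝ → ℝ)
    (g : EuclideanSpace ℝ (Fin n) → ℝ → EuclideanSpace ℝ (Fin n))
    (hgrad : ∀ (x : EuclideanSpace ℝ (Fin n)) (t : ℝ),
      HasFDerivAt (fun y => f y t) (innerSL ℝ (g x t)) x)
    (μ L L11 : ℝ) (hμ : 0 < μ) (hμL : μ ≤ L)
    (hlipx : ∀ (x y : EuclideanSpace ℝ (Fin n)) (t : ℝ),
      ‖g x t - g y t‖ ≤ L * ‖x - y‖)
    (hpl : ∀ (x : EuclideanSpace ℝ (Fin n)) (t : ℝ),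
      f x t - (⨅ y, f y t) ≤ 1 / (2 * μ) * ‖g x t‖ ^ 2)
    (hne : ∀ t : ℝ, {x | ∀ y, f x t ≤ f y t}.Nonempty)
    (hlipt : ∀ (x : EuclideanSpace ℝ (Fin n)) (s t : ℝ),
      ‖g x s - g x t‖ ≤ L11 * |s - t|)
    (α : ℝ) (hα0 : 0 < α) (hα2 : α < 2 / L) (v : ℝ)
    (C : ℕ) (hC : Real.log (L / μ) / Real.log (1 / (1 - α * μ * (2 - α * L))) < C)
    (xhat xc : ℕ → EuclideanSpace ℝ (Fin n))
    (hacc : ∀ k : ℕ, 1 ≤ k → ‖xhat k - xc (k - 1)‖ ≤ v * h)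
    (hcorr : ∀ k : ℕ, 1 ≤ k →
      xc k = (fun y => y - α • g y ((k : ℝ) * h))^[C] (xhat k)) :
    Filter.limsup (fun k : ℕ =>
        Metric.infDist (xhat k) {x | ∀ y, f x ((k : ℝ) * h) ≤ f y ((k : ℝ) * h)})
      Filter.atTop
      ≤ (v + L11 / μ) / (1 - Real.sqrt (L / μ * (1 - α * μ * (2 - α * L)) ^ C)) * h ∧
    Filter.limsup (fun k : ℕ =>
        f (xhat k) ((k : ℝ) * h) - (⨅ y, f y ((k : ℝ) * h)))
      Filter.atTop
      ≤ L / 2 *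
          ((v + L11 / μ) / (1 - Real.sqrt (L / μ * (1 - α * μ * (2 - α * L)) ^ C))) ^ 2
          * h ^ 2 := by
  have hL : 0 < L := hμ.trans_le hμL
  have hαL : α * L < 2 := by rwa [lt_div_iff₀ hL] at hα2
  set ρ := √(L / μ * (1 - α * μ * (2 - α * L)) ^ C)
  have hρ1 : ρ < 1 := sqrt_div_mul_pow_lt_one hμ hμL hα0 hαL hC
  set d : ℕ → ℝ := fun k => infDist (xhat k) {x | ∀ y, f x (k * h) ≤ f y (k * h)}
  have hrec : ∀ k, d (k + 1 + 1) ≤ ρ * d (k + 1) + (v + L11 / μ) * h := fun k => by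
    have hstep := infDist_le_of_iterate_gradient_step hgrad hlipx hpl hμ hμL hne hlipt hα0.le
      hαL.le C (((k + 1 : ℕ) : ℝ) * h) (((k + 1 + 1 : ℕ) : ℝ) * h) (xhat (k + 1)) (xhat (k + 1 + 1))
    have ht : |((k + 1 : ℕ) : ℝ) * h - ((k + 1 + 1 : ℕ) : ℝ) * h| = h := by
      push_cast; rw [show ((k : ℝ) + 1) * h - (k + 1 + 1) * h = -h by ring, abs_neg, abs_of_pos hh]
    rw [← hcorr (k + 1) (by omega), dist_eq_norm, ht] at hstep
    have hnear := hacc (k + 1 + 1) (by omega)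
    rw [Nat.add_sub_cancel] at hnear
    refine hstep.trans ?_
    linarith [show (v + L11 / μ) * h = v * h + L11 * h / μ by ring]
  obtain ⟨u, hu, hdu⟩ :=
    exists_tendsto_ge_of_le_mul_add (d := fun k => d (k + 1)) (Real.sqrt_nonneg _) hρ1 hrec
  constructor
  · rw [← limsup_nat_add _ 1, div_mul_eq_mul_div]
    exact limsup_le_of_le_of_tendsto (fun _ => infDist_nonneg) hdu hu
  · rw [← limsup_nat_add _ 1, show L / 2 * ((v + L11 / μ) / (1 - ρ)) ^ 2 * h ^ 2
      = L / 2 * ((v + L11 / μ) * h / (1 - ρ)) ^ 2 by ring]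
    refine limsup_le_of_le_of_tendsto (c := 0) (fun k => ?_) (fun k => ?_) ((hu.pow 2).const_mul _)
    · obtain ⟨m, hm⟩ := hne (((k + 1 : ℕ) : ℝ) * h)
      rw [iInf_eq_of_isMin (f := (f · _)) hm, sub_nonneg]
      exact hm _
    · exact (sub_iInf_le_mul_infDist_sq (hgrad · _) (hlipx · · _) hL (hne _) _).trans
        (mul_le_mul_of_nonneg_left (pow_le_pow_left₀ infDist_nonneg (hdu k) 2) (by positivity))

/-- Asymptotic tracking error of the SHARP algorithm for `μ`-PL objectives:
`limsup_k dist(x̂_k, X*(t_k)) ≤ (v + L₁₁/μ)h/(1 − √(κθ^C))` and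
`limsup_k (f(x̂_k;t_k) − f*(t_k)) ≤ (L/2)((v + L₁₁/μ)/(1 − √(κθ^C)))²h²`,
where `κ = L/μ`, `θ = 1 − αμ(2 − αL)`, and `C > log κ / log(1/θ)`. -/
theorem sharp_pl_tracking_error
    (n : ℕ) (h : ℝ) (hh : 0 < h)
    (f : EuclideanSpace ℝ (Fin n) → ℝ → ℝ)
    (g : EuclideanSpace ℝ (Fin n) → ℝ → EuclideanSpace ℝ (Fin n))
    (hgrad : ∀ (x : EuclideanSpace ℝ (Fin n)) (t : ℝ),
      HasFDerivAt (fun y => f y t) (innerSL ℝ (g x t)) x)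
    (μ L L11 : ℝ) (hμ : 0 < μ) (hμL : μ ≤ L) (hL11 : 0 ≤ L11)
    (hlipx : ∀ (x y : EuclideanSpace ℝ (Fin n)) (t : ℝ),
      ‖g x t - g y t‖ ≤ L * ‖x - y‖)
    (hpl : ∀ (x : EuclideanSpace ℝ (Fin n)) (t : ℝ),
      f x t - (⨅ y, f y t) ≤ 1 / (2 * μ) * ‖g x t‖ ^ 2)
    (hne : ∀ t : ℝ, {x | ∀ y, f x t ≤ f y t}.Nonempty)
    (hlipt : ∀ (x : EuclideanSpace ℝ (Fin n)) (s t : ℝ),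
      ‖g x s - g x t‖ ≤ L11 * |s - t|)
    (α : ℝ) (hα0 : 0 < α) (hα2 : α < 2 / L) (v : ℝ) (hv : 0 ≤ v)
    (C : ℕ) (hC : Real.log (L / μ) / Real.log (1 / (1 - α * μ * (2 - α * L))) < C)
    (xhat xc : ℕ → EuclideanSpace ℝ (Fin n))
    (hacc : ∀ k : ℕ, 1 ≤ k → ‖xhat k - xc (k - 1)‖ ≤ v * h)
    (hcorr : ∀ k : ℕ, 1 ≤ k →
      xc k = (fun y => y - α • g y ((k : ℝ) * h))^[C] (xhat k)) :
    Filter.limsup (fun k : ℕ =>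
        Metric.infDist (xhat k) {x | ∀ y, f x ((k : ℝ) * h) ≤ f y ((k : ℝ) * h)})
      Filter.atTop
      ≤ (v + L11 / μ) / (1 - Real.sqrt (L / μ * (1 - α * μ * (2 - α * L)) ^ C)) * h ∧
    Filter.limsup (fun k : ℕ =>
        f (xhat k) ((k : ℝ) * h) - (⨅ y, f y ((k : ℝ) * h)))
      Filter.atTop
      ≤ L / 2 *
          ((v + L11 / μ) / (1 - Real.sqrt (L / μ * (1 - α * μ * (2 - α * L)) ^ C))) ^ 2
          * h ^ 2 :=
  sharp_pl_tracking_error_general n h hh f g hgrad μ L L11 hμ hμL hlipx hpl hne hlipt α hα0 hα2 v C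
    hC xhat xc hacc hcorr
end
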